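/- arXiv:1412.1153 — 2 statements merged into one kernel-verified Lean document; each statement's English description precedes it below -/
import Mathlib

section
/- If a k-indexed invariant R proves safety of an infinite homogeneous system (i.e., R is symmetric, holds for all k-tuples of distinct initial process states, is preserved by transitions of any process, and excludes every error configuration), then the (k+1)-indexed invariant R' defined by R'(g, p₁, l₁, …, p_{k+1}, l_{k+1}) = ⋀_{1 ≤ i₁ < … < iₖ ≤ k+1} R(g, p_{i₁}, l_{i₁}, …, p_{iₖ}, l_{iₖ}) is also symmetric, holds for all (k+1)-tuples of distinct initial states, is preserved by transitions, and excludes every error configuration. -/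
lemma factor_injective {k : ℕ} (e : Fin k → Fin (k + 1)) (he : Function.Injective e) :
    ∃ (j : Fin (k + 1)) (τ : Equiv.Perm (Fin k)), ∀ i, e i = j.succAbove (τ i) := by
  have hns : ¬ Function.Surjective e := by
    intro hs
    have := Fintype.card_le_of_surjective e hs
    simp at this
  obtain ⟨j, hj⟩ := not_forall.mp hns
  choose τ₀ hτ₀ using fun i => Fin.exists_succAbove_eq (show e i ≠ j from fun h => hj ⟨i, h⟩)
  have hinj : Function.Injective τ₀ := fun a b h => he (by rw [← hτ₀ a, ← hτ₀ b, h])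
  exact ⟨j, Equiv.ofBijective τ₀ (Finite.injective_iff_bijective.mp hinj),
    fun i => (hτ₀ i).symm⟩

lemma succ_succAbove_cons {k : ℕ} {α : Type*} (a : α) (F : Fin (k + 1) → α)
    (j : Fin (k + 1)) (i : Fin (k + 1)) :
    (Fin.cons a (F ∘ j.succAbove) : Fin (k + 1) → α) i
      = (Fin.cons a F : Fin (k + 2) → α) (j.succ.succAbove i) := by
  induction i using Fin.cases with
  | zero => simp [Fin.succ_succAbove_zero]
  | succ i => simp [Fin.succ_succAbove_succ]


/-- Part (1) of the Expressiveness theorem: if a k-indexed invariant R proves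
safety of an infinite homogeneous system (symmetry, initiation, consecution
for an observed and for an external process, and error exclusion), then the
(k+1)-indexed invariant R' given by the conjunction of R over all k-element
subsets of the k+1 observed processes satisfies the same conditions. -/
theorem k_indexed_invariant_lift
    {G L : Type} (k : ℕ) (hk : 0 < k)
    (Init : G → L → Prop)
    (step : ℕ → G × L → G × L → Prop)
    (Err : G → (ℕ → L) → Prop)
    (R : G → (Fin k → ℕ × L) → Prop)
    -- symmetry
    (hsym : ∀ (g : G) (f : Fin k → ℕ × L) (σ : Equiv.Perm (Fin k)),
      R g f → R g (f ∘ σ))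
    -- initiation
    (hinit : ∀ (g : G) (f : Fin k → ℕ × L),
      Function.Injective (fun i => (f i).1) → (∀ i, Init g (f i).2) → R g f)
    -- consecution, observed process (the first one; by symmetry any)
    (hcons₁ : ∀ (g g' : G) (f : Fin k → ℕ × L) (l' : L),
      Function.Injective (fun i => (f i).1) →
      step (f ⟨0, hk⟩).1 (g, (f ⟨0, hk⟩).2) (g', l') →
      R g f → R g' (Function.update f ⟨0, hk⟩ ((f ⟨0, hk⟩).1, l')))
    -- consecution, external process
    (hcons₂ : ∀ (g g' : G) (f : Fin k → ℕ × L) (p₀ : ℕ) (l₀ l₀' : L),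
      Function.Injective
        (fun i : Fin (k + 1) => ((Fin.cons (p₀, l₀) f : Fin (k + 1) → ℕ × L) i).1) →
      step p₀ (g, l₀) (g', l₀') →
      (∀ j : Fin (k + 1), R g ((Fin.cons (p₀, l₀) f : Fin (k + 1) → ℕ × L) ∘ j.succAbove)) →
      R g' f)
    -- error exclusion
    (herr : ∀ (g : G) (lbar : ℕ → L),
      (∀ f : Fin k → ℕ, Function.Injective f →
        R g (fun i => (f i, lbar (f i)))) → ¬ Err g lbar) :
    -- the (k+1)-indexed invariant R'
    let R' : G → (Fin (k + 1) → ℕ × L) → Prop :=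
      fun g F => ∀ j : Fin (k + 1), R g (F ∘ j.succAbove)
    (∀ (g : G) (F : Fin (k + 1) → ℕ × L) (σ : Equiv.Perm (Fin (k + 1))),
      R' g F → R' g (F ∘ σ)) ∧
    (∀ (g : G) (F : Fin (k + 1) → ℕ × L),
      Function.Injective (fun i => (F i).1) → (∀ i, Init g (F i).2) → R' g F) ∧
    (∀ (g g' : G) (F : Fin (k + 1) → ℕ × L) (l' : L),
      Function.Injective (fun i => (F i).1) →
      step (F 0).1 (g, (F 0).2) (g', l') →
      R' g F → R' g' (Function.update F 0 ((F 0).1, l'))) ∧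
    (∀ (g g' : G) (F : Fin (k + 1) → ℕ × L) (p₀ : ℕ) (l₀ l₀' : L),
      Function.Injective
        (fun i : Fin (k + 2) => ((Fin.cons (p₀, l₀) F : Fin (k + 2) → ℕ × L) i).1) →
      step p₀ (g, l₀) (g', l₀') →
      (∀ j : Fin (k + 2), R' g ((Fin.cons (p₀, l₀) F : Fin (k + 2) → ℕ × L) ∘ j.succAbove)) →
      R' g' F) ∧
    (∀ (g : G) (lbar : ℕ → L),
      (∀ f : Fin (k + 1) → ℕ, Function.Injective f →
        R' g (fun i => (f i, lbar (f i)))) → ¬ Err g lbar) := by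
  intro R'
  -- derived closure: R' g F implies R g (F ∘ e) for every injective e : Fin k → Fin (k+1)
  have hcomp : ∀ (g : G) (F : Fin (k + 1) → ℕ × L) (e : Fin k → Fin (k + 1)),
      Function.Injective e → R' g F → R g (F ∘ e) := by
    intro g F e he hF
    obtain ⟨j, τ, hfac⟩ := factor_injective e he
    have := hsym g (F ∘ j.succAbove) τ (hF j)
    have heq : F ∘ e = (F ∘ j.succAbove) ∘ τ := by
      funext i; simp [hfac i]
    rwa [heq]
  refine ⟨?_, ?_, ?_, ?_, ?_⟩
  · -- symmetry
    intro g F σ hF j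
    exact hcomp g F (σ ∘ j.succAbove) ((Equiv.injective σ).comp (Fin.succAbove_right_injective)) hF
  · -- initiation
    intro g F hFinj hFinit j
    refine hinit g (F ∘ j.succAbove) ?_ (fun i => hFinit _)
    exact fun a b h => Fin.succAbove_right_injective (hFinj h)
  · -- consecution, observed process
    intro g g' F l' hFinj hstep hF j
    rcases eq_or_ne j 0 with rfl | hj
    · -- j = 0 : the updated process is not observed; external consecution
      have h0 : (Function.update F 0 ((F 0).1, l')) ∘ (0 : Fin (k + 1)).succAbove
          = F ∘ Fin.succ := by
        funext i
        simp [Fin.zero_succAbove, Function.update_of_ne (Fin.succ_ne_zero i)]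
      rw [h0]
      refine hcons₂ g g' (F ∘ Fin.succ) (F 0).1 (F 0).2 l' ?_ hstep ?_
      · have : (Fin.cons ((F 0).1, (F 0).2) (F ∘ Fin.succ) : Fin (k + 1) → ℕ × L) = F := by
          funext i
          induction i using Fin.cases with
          | zero => simp
          | succ i => simp
        rw [this]; exact hFinj
      · intro j'
        have : (Fin.cons ((F 0).1, (F 0).2) (F ∘ Fin.succ) : Fin (k + 1) → ℕ × L) = F := by
          funext i
          induction i using Fin.cases with
          | zero => simp
          | succ i => simp
        rw [this]; exact hF j'
    · -- j ≠ 0 : index 0 is among the observed processes of the j-projection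
      have h0pos : (0 : Fin (k + 1)) < j := Fin.pos_of_ne_zero hj
      have hsa0 : j.succAbove ⟨0, hk⟩ = 0 := by
        rw [Fin.succAbove_of_castSucc_lt]
        · rfl
        · exact h0pos
      have hkey : (Function.update F 0 ((F 0).1, l')) ∘ j.succAbove
          = Function.update (F ∘ j.succAbove) ⟨0, hk⟩
              (((F ∘ j.succAbove) ⟨0, hk⟩).1, l') := by
        funext i
        rcases eq_or_ne i ⟨0, hk⟩ with rfl | hi
        · simp only [Function.comp_apply, Function.update_self]
          rw [hsa0]
          simp
        · have hne : j.succAbove i ≠ 0 := by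
            rw [← hsa0]
            exact fun h => hi (Fin.succAbove_right_injective h)
          simp [Function.update_of_ne hne, Function.update_of_ne hi]
      rw [hkey]
      refine hcons₁ g g' (F ∘ j.succAbove) l' ?_ ?_ ?_
      · exact fun a b h => Fin.succAbove_right_injective (hFinj h)
      · simpa [hsa0] using hstep
      · exact hF j
  · -- consecution, external process
    intro g g' F p₀ l₀ l₀' hinj hstep hH j
    refine hcons₂ g g' (F ∘ j.succAbove) p₀ l₀ l₀' ?_ hstep ?_
    · have hfun : (fun i : Fin (k + 1) =>
          ((Fin.cons (p₀, l₀) (F ∘ j.succAbove) : Fin (k + 1) → ℕ × L) i).1)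
          = (fun i : Fin (k + 2) =>
              ((Fin.cons (p₀, l₀) F : Fin (k + 2) → ℕ × L) i).1) ∘ j.succ.succAbove := by
        funext i
        simp [succ_succAbove_cons (p₀, l₀) F j i]
      rw [hfun]
      exact hinj.comp (Fin.succAbove_right_injective)
    · intro j'
      have := hH j.succ j'
      have heq : (Fin.cons (p₀, l₀) (F ∘ j.succAbove) : Fin (k + 1) → ℕ × L) ∘ j'.succAbove
          = (((Fin.cons (p₀, l₀) F : Fin (k + 2) → ℕ × L) ∘ j.succ.succAbove) ∘ j'.succAbove) := by
        funext i
        exact succ_succAbove_cons (p₀, l₀) F j (j'.succAbove i)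
      rwa [heq]
  · -- error exclusion
    intro g lbar hR
    refine herr g lbar ?_
    intro f hf
    obtain ⟨m, hm⟩ := (Set.finite_range f).infinite_compl.nonempty
    have hm' : m ∉ Set.range f := hm
    have hinj' : Function.Injective (Fin.cons m f : Fin (k + 1) → ℕ) := by
      intro a b h
      induction a using Fin.cases with
      | zero =>
        induction b using Fin.cases with
        | zero => rfl
        | succ b => exact absurd ⟨b, by simpa using h.symm⟩ hm'
      | succ a =>
        induction b using Fin.cases with
        | zero => exact absurd ⟨a, by simpa using h⟩ hm'
        | succ b => exact congrArg Fin.succ (hf (by simpa using h))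
    have := hR (Fin.cons m f) hinj' 0
    have heq : (fun i : Fin (k + 1) =>
        ((Fin.cons m f : Fin (k + 1) → ℕ) i, lbar ((Fin.cons m f : Fin (k + 1) → ℕ) i)))
          ∘ (0 : Fin (k + 1)).succAbove
        = fun i : Fin k => (f i, lbar (f i)) := by
      funext i
      simp [Fin.zero_succAbove]
    rwa [heq] at this
end

section
/- Soundness of the finite Horn encoding: let P = {1,…,n} be a finite set of processes with initial-state predicates Init_p ⊆ G × L_p and transition relations →_p, let A be an invariant schema (an antichain in {0,1}ⁿ), and suppose relations {R_ā | ā ∈ A} satisfy: (i) R_ā(g, l_{i₁},…,l_{iₖ}) holds whenever Init_{i₁}(g,l₁) ∧ … ∧ Init_{iₖ}(g,lₖ) (where i₁<…<iₖ are the nonzero indices of ā); (ii) each R_ā is preserved by any process transition under the context invariant; (iii) no error configuration satisfies the context invariant. Then the composed system is safe. -/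
/-- Soundness of the finite Horn encoding (Fig. 3): if the relations
{R_ā | ā ∈ A} of an invariant schema A satisfy initiation, consecution under
the context invariant, and error exclusion, the composed system is safe.
Each relation R_ā only depends on the local states of the processes selected
by ā (hypothesis `hRdep`). -/
theorem finite_horn_encoding_sound
    {n : ℕ} {G : Type} {L : Fin n → Type}
    (Init : ∀ p : Fin n, G → L p → Prop)
    (step : ∀ p : Fin n, (G × L p) → (G × L p) → Prop)
    (m : ℕ) (pe : Fin m → Fin n) (hpe : Function.Injective pe)
    (E : ∀ j : Fin m, G → L (pe j) → Prop)
    (A : Set (Fin n → Bool)) (hA : IsAntichain (· ≤ ·) A)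
    (R : (Fin n → Bool) → G → (∀ p : Fin n, L p) → Prop)
    -- R_ā depends only on the local states selected by ā
    (hRdep : ∀ a ∈ A, ∀ (g : G) (l l' : ∀ p, L p),
      (∀ p, a p = true → l p = l' p) → R a g l → R a g l')
    -- (i) initiation
    (hinit : ∀ a ∈ A, ∀ (g : G) (l : ∀ p, L p),
      (∀ p, a p = true → Init p g (l p)) → R a g l)
    -- (ii) consecution under the context invariant Ctxt({p}, g, l)
    (hcons : ∀ a ∈ A, ∀ (p : Fin n) (g g' : G) (l : ∀ q, L q) (l' : L p),
      step p (g, l p) (g', l') →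
      R a g l →
      (∀ c ∈ A, c p = true → R c g l) →
      R a g' (Function.update l p l'))
    -- (iii) no error configuration satisfies the context invariant
    (herr : ∀ (g : G) (l : ∀ p, L p),
      (∀ j : Fin m, E j g (l (pe j))) →
      (∀ c ∈ A, (∃ j : Fin m, c (pe j) = true) → R c g l) →
      False) :
    -- the composed system is safe
    ∀ s t : G × (∀ p : Fin n, L p),
      (∀ p, Init p s.1 (s.2 p)) →
      Relation.ReflTransGen
        (fun s t => ∃ (p : Fin n) (l' : L p),
          step p (s.1, s.2 p) (t.1, l') ∧ t.2 = Function.update s.2 p l') s t →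
      ¬ ∀ j : Fin m, E j t.1 (t.2 (pe j)) := by
  intro s t hs hst
  have hinv : ∀ a ∈ A, R a t.1 t.2 := by
    clear herr
    induction hst with
    | refl => exact fun a ha => hinit a ha s.1 s.2 fun p _ => hs p
    | tail _ hstep ih =>
      rename_i u v _
      obtain ⟨p, l', hstp, hv⟩ := hstep
      intro a ha
      have := hcons a ha p u.1 v.1 u.2 l' hstp (ih a ha)
        (fun c hc _ => ih c hc)
      rw [hv]
      exact this
  intro hE
  exact herr t.1 t.2 hE fun c hc _ => hinv c hc
end
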